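/- For every real number u > 1, the function λ ↦ (∫_u^∞ dx/√(x(x−1)(x−λ))) / (∫_0^1 dx/√(x(1−x)(λ−x))) is strictly increasing on the interval (1, u). -/

import Mathlib

/-!
Both integrands are positive. As `λ` grows, the factor `x - λ` in `I_u` shrinks while the factor
`λ - x` in `J` grows, so `I_u` is strictly increasing and `J` is decreasing and positive, whence
`I_u / J` is strictly increasing. The only analytic input is convergence: the integrand of `I_u`
is `O(x^(-3/2))` at `∞`, and that of `J` is `O(x^(-1/2))` at `0` and `O((1 - x)^(-1/2))` at `1`.
-/

open MeasureTheory Set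

noncomputable def ellipticI (u lam : ℝ) : ℝ :=
  ∫ x in Ioi u, (√(x * (x - 1) * (x - lam)))⁻¹

noncomputable def ellipticJ (lam : ℝ) : ℝ :=
  ∫ x in Ioo (0 : ℝ) 1, (√(x * (1 - x) * (lam - x)))⁻¹

theorem StrictMonoOn.div_of_antitoneOn {f g : ℝ → ℝ} {s : Set ℝ} (hf : StrictMonoOn f s)
    (hf₀ : ∀ x ∈ s, 0 ≤ f x) (hg : AntitoneOn g s) (hg₀ : ∀ x ∈ s, 0 < g x) :
    StrictMonoOn (fun x => f x / g x) s := fun a ha b hb hab =>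
  calc f a / g a < f b / g a := div_lt_div_of_pos_right (hf ha hb hab) (hg₀ a ha)
    _ ≤ f b / g b := div_le_div_of_nonneg_left (hf₀ b hb) (hg₀ b hb) (hg ha hb hab.le)

theorem setIntegral_lt_setIntegral_of_forall_lt {X : Type*} [MeasurableSpace X]
    {μ : Measure X} {s : Set X} (hμ : μ s ≠ 0) {f g : X → ℝ} (hf : IntegrableOn f s μ)
    (hg : IntegrableOn g s μ) (hs : MeasurableSet s) (hfg : ∀ x ∈ s, f x < g x) :
    ∫ x in s, f x ∂μ < ∫ x in s, g x ∂μ := by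
  rw [← sub_pos, ← integral_sub hg hf, setIntegral_pos_iff_support_of_nonneg_ae
    ((ae_restrict_iff' hs).2 <| .of_forall fun x hx => sub_nonneg.2 (hfg x hx).le) (hg.sub hf)]
  refine (pos_iff_ne_zero.2 hμ).trans_le (measure_mono fun x hx => ⟨?_, hx⟩)
  exact (sub_pos.2 (hfg x hx)).ne'

theorem MeasureTheory.IntegrableOn.inv_sqrt_of_mul_le {X : Type*} [MeasurableSpace X]
    {μ : Measure X} {s : Set X} {f g : X → ℝ} {c : ℝ}
    (hg : IntegrableOn (fun x => (√(g x))⁻¹) s μ)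
    (hf : Measurable f) (hs : MeasurableSet s) (hc : 0 < c)
    (hfg : ∀ x ∈ s, 0 < g x ∧ c * g x ≤ f x) :
    IntegrableOn (fun x => (√(f x))⁻¹) s μ := by
  refine (hg.const_mul (√c)⁻¹).mono' (by fun_prop) ((ae_restrict_iff' hs).2 <| .of_forall ?_)
  intro x hx
  obtain ⟨hg₀, hle⟩ := hfg x hx
  rw [Real.norm_of_nonneg (by positivity), ← mul_inv, ← Real.sqrt_mul hc.le]
  exact inv_anti₀ (by positivity) (Real.sqrt_le_sqrt hle)

theorem integrableOn_Ioi_inv_sqrt_pow_three {u : ℝ} (hu : 0 < u) :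
    IntegrableOn (fun x : ℝ => (√(x ^ 3))⁻¹) (Ioi u) := by
  refine (integrableOn_Ioi_rpow_of_lt (a := -(3 / 2)) (by norm_num) hu).congr_fun
    (fun x (hx : u < x) => ?_) measurableSet_Ioi
  dsimp only
  rw [Real.sqrt_eq_rpow, ← Real.rpow_natCast_mul (hu.trans hx).le, Real.rpow_neg (hu.trans hx).le]
  norm_num

theorem integrableOn_Ioo_inv_sqrt : IntegrableOn (fun x : ℝ => (√x)⁻¹) (Ioo 0 1) := by
  refine ((intervalIntegral.integrableOn_Ioo_rpow_iff one_pos).2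
    (by norm_num : -1 < -(1 / 2 : ℝ))).congr_fun (fun x hx => ?_) measurableSet_Ioo
  dsimp only
  rw [Real.rpow_neg hx.1.le, ← Real.sqrt_eq_rpow]

theorem integrableOn_Ioo_inv_sqrt_one_sub :
    IntegrableOn (fun x : ℝ => (√(1 - x))⁻¹) (Ioo 0 1) := by
  have h := ((intervalIntegrable_iff_integrableOn_Ioo_of_le zero_le_one).2
    integrableOn_Ioo_inv_sqrt).comp_sub_left 1
  rw [sub_self, sub_zero] at h
  exact (intervalIntegrable_iff_integrableOn_Ioo_of_le zero_le_one).1 h.symm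

theorem integrableOn_Ioi_inv_sqrt_cubic {u lam : ℝ} (hu : 1 < u) (hlam : lam < u) :
    IntegrableOn (fun x => (√(x * (x - 1) * (x - lam)))⁻¹) (Ioi u) := by
  set m := max 1 lam
  have hm : 0 < m := lt_max_of_lt_left one_pos
  have hmu : m < u := max_lt hu hlam
  have hu₀ : 0 < u := hm.trans hmu
  set t := 1 - m / u
  have ht : 0 < t := sub_pos.2 ((div_lt_one hu₀).2 hmu)
  have hlin : ∀ x ∈ Ioi u, ∀ r ≤ m, t * x ≤ x - r := fun x (hx : u < x) r hr => by
    have : m ≤ m / u * x := by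
      rw [div_mul_eq_mul_div, le_div_iff₀ hu₀]
      exact mul_le_mul_of_nonneg_left hx.le hm.le
    linarith
  refine (integrableOn_Ioi_inv_sqrt_pow_three hu₀).inv_sqrt_of_mul_le (by fun_prop)
    measurableSet_Ioi (pow_pos ht 3) fun x hx => ⟨pow_pos (hu₀.trans hx) 3, ?_⟩
  have hx₀ : 0 < x := hu₀.trans hx
  have htx : 0 ≤ t * x := mul_nonneg ht.le hx₀.le
  have h₀ : t * x ≤ x := by simpa using hlin x hx 0 hm.le
  have h₁ := hlin x hx 1 (le_max_left _ _)
  have hlam' := hlin x hx lam (le_max_right _ _)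
  calc t ^ 3 * x ^ 3 = t * x * (t * x) * (t * x) := by ring
    _ ≤ x * (x - 1) * (x - lam) := by gcongr; nlinarith

theorem integrableOn_Ioo_inv_sqrt_cubic {lam : ℝ} (hlam : 1 < lam) :
    IntegrableOn (fun x => (√(x * (1 - x) * (lam - x)))⁻¹) (Ioo 0 1) := by
  have hc : 0 < (lam - 1) / 2 := by linarith
  rw [← Ioc_union_Ioo_eq_Ioo (b := 1 / 2) (by norm_num) (by norm_num)]
  refine .union ?_ ?_
  · have hg : IntegrableOn (fun x : ℝ => (√x)⁻¹) (Ioc 0 (1 / 2)) :=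
      integrableOn_Ioo_inv_sqrt.mono_set fun x hx => ⟨hx.1, by linarith [hx.2]⟩
    refine hg.inv_sqrt_of_mul_le (by fun_prop) measurableSet_Ioc hc fun x ⟨hx₀, hx₁⟩ =>
      ⟨hx₀, ?_⟩
    have : 1 / 2 * (lam - 1) ≤ (1 - x) * (lam - x) := by gcongr <;> linarith
    nlinarith
  · have hg : IntegrableOn (fun x : ℝ => (√(1 - x))⁻¹) (Ioo (1 / 2) 1) :=
      integrableOn_Ioo_inv_sqrt_one_sub.mono_set fun x hx => ⟨by linarith [hx.1], hx.2⟩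
    refine hg.inv_sqrt_of_mul_le (by fun_prop) measurableSet_Ioo hc fun x ⟨hx₀, hx₁⟩ =>
      ⟨by linarith, ?_⟩
    have : 1 / 2 * (lam - 1) ≤ x * (lam - x) := by gcongr
    nlinarith

theorem ellipticI_nonneg (u lam : ℝ) : 0 ≤ ellipticI u lam :=
  integral_nonneg fun _ => by positivity

theorem ellipticI_strictMonoOn {u : ℝ} (hu : 1 < u) : StrictMonoOn (ellipticI u) (Iio u) := by
  intro a (ha : a < u) b (hb : b < u) hab
  refine setIntegral_lt_setIntegral_of_forall_lt (by simp) (integrableOn_Ioi_inv_sqrt_cubic hu ha)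
    (integrableOn_Ioi_inv_sqrt_cubic hu hb) measurableSet_Ioi fun x (hx : u < x) => ?_
  have hx₁ : 0 < x * (x - 1) := mul_pos (by linarith) (by linarith)
  have hb₀ : 0 < x * (x - 1) * (x - b) := mul_pos hx₁ (by linarith)
  refine inv_strictAnti₀ (Real.sqrt_pos.2 hb₀) (Real.sqrt_lt_sqrt hb₀.le ?_)
  exact mul_lt_mul_of_pos_left (by linarith) hx₁

theorem ellipticJ_strictAntiOn : StrictAntiOn ellipticJ (Ioi 1) := by
  intro a (ha : 1 < a) b (hb : 1 < b) hab
  refine setIntegral_lt_setIntegral_of_forall_lt (by simp) (integrableOn_Ioo_inv_sqrt_cubic hb)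
    (integrableOn_Ioo_inv_sqrt_cubic ha) measurableSet_Ioo fun x ⟨hx₀, hx₁⟩ => ?_
  have hx : 0 < x * (1 - x) := mul_pos hx₀ (by linarith)
  have ha₀ : 0 < x * (1 - x) * (a - x) := mul_pos hx (by linarith)
  refine inv_strictAnti₀ (Real.sqrt_pos.2 ha₀) (Real.sqrt_lt_sqrt ha₀.le ?_)
  exact mul_lt_mul_of_pos_left (by linarith) hx

theorem ellipticJ_pos {lam : ℝ} (hlam : 1 < lam) : 0 < ellipticJ lam := by
  have h := setIntegral_lt_setIntegral_of_forall_lt (by simp) integrableOn_zero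
    (integrableOn_Ioo_inv_sqrt_cubic hlam) measurableSet_Ioo fun x ⟨hx₀, hx₁⟩ => by
      have : 0 < x * (1 - x) * (lam - x) := mul_pos (mul_pos hx₀ (by linarith)) (by linarith)
      positivity
  rwa [integral_zero] at h

/-- For `u > 1`, the ratio `I_u(λ)/J(λ)`, where
`I_u(λ) = ∫_u^∞ dx/√(x(x−1)(x−λ))` and `J(λ) = ∫_0^1 dx/√(x(1−x)(λ−x))`, is strictly
increasing for `λ ∈ (1, u)`. -/
theorem elliptic_integral_ratio_strictMono (u : ℝ) (hu : 1 < u) :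
    StrictMonoOn (fun lam : ℝ =>
      (∫ x in Set.Ioi u, (Real.sqrt (x * (x - 1) * (x - lam)))⁻¹) /
      (∫ x in Set.Ioo (0 : ℝ) 1, (Real.sqrt (x * (1 - x) * (lam - x)))⁻¹))
      (Set.Ioo 1 u) :=
  ((ellipticI_strictMonoOn hu).mono Ioo_subset_Iio_self).div_of_antitoneOn
    (fun lam _ => ellipticI_nonneg u lam)
    (ellipticJ_strictAntiOn.antitoneOn.mono Ioo_subset_Ioi_self)
    fun _ hlam => ellipticJ_pos hlam.1
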